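/- arXiv:2412.18369 — 7 statements merged into one kernel-verified Lean document; each statement's English description precedes it below -/
import Mathlib

section
/- Let U be a finite-dimensional subspace of P = K[x_1,...,x_n] with a K-basis g'_1,...,g'_s, q_1,...,q_u where g'_i = z_i - h_i with h_i ∈ P_{≥2}, the q_j ∈ P_{≥2} have pairwise distinct leading terms with respect to the lexicographic ordering σ, and no leading term LT_σ(q_j) appears in the support of any h_i. Then for each i ∈ {1,...,s}, the indeterminate z_i belongs to U if and only if h_i = 0. -/
open MvPolynomial

/-- The subspace `P_{≥k}` of polynomials all of whose terms have total degree `≥ k`. -/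
noncomputable def Pge (K : Type*) [Field K] (n k : ℕ) :
    Submodule K (MvPolynomial (Fin n) K) where
  carrier := {f | ∀ d ∈ f.support, k ≤ d.sum fun _ e => e}
  add_mem' := by
    intro a b ha hb d hd
    rcases Finset.mem_union.mp (MvPolynomial.support_add hd) with h | h
    · exact ha d h
    · exact hb d h
  zero_mem' := by simp
  smul_mem' := by
    intro c f hf d hd
    exact hf d (MvPolynomial.support_smul hd)

/-- The lexicographic term ordering (with `x_1 > x_2 > … > x_n`) on exponent tuples. -/
def lexLe {n : ℕ} (a b : Fin n →₀ ℕ) : Prop := toLex a ≤ toLex b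

/-- `d` is the exponent of the lex-leading term of `f`. -/
def IsLexLeadingTerm {n : ℕ} {K : Type*} [CommSemiring K]
    (f : MvPolynomial (Fin n) K) (d : Fin n →₀ ℕ) : Prop :=
  d ∈ f.support ∧ ∀ d' ∈ f.support, lexLe d' d

/-- With a basis `z_i - h_i, q_j` of `U` as in Algorithm 3.1, where the `q_j`
have pairwise distinct lex leading terms none of which occurs in the support of any `h_i`,
one has `z_i ∈ U ↔ h_i = 0`. -/
theorem X_mem_iff_h_eq_zero {K : Type*} [Field K] {n s u : ℕ}
    (z : Fin s → Fin n) (hz : Function.Injective z)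
    (h : Fin s → MvPolynomial (Fin n) K) (hh : ∀ i, h i ∈ Pge K n 2)
    (q : Fin u → MvPolynomial (Fin n) K) (hq : ∀ j, q j ∈ Pge K n 2)
    (hindep : LinearIndependent K (Sum.elim (fun i => X (z i) - h i) q))
    (L : Fin u → (Fin n →₀ ℕ)) (hL : ∀ j, IsLexLeadingTerm (q j) (L j))
    (hLinj : Function.Injective L)
    (hLh : ∀ i j, L j ∉ (h i).support)
    (U : Submodule K (MvPolynomial (Fin n) K))
    (hU : U = Submodule.span K
      (Set.range (Sum.elim (fun i => (X (z i) : MvPolynomial (Fin n) K) - h i) q))) :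
    ∀ i, (X (z i) : MvPolynomial (Fin n) K) ∈ U ↔ h i = 0 := by

  classical
  intro i
  have coeff_single_eq_zero : ∀ (f : MvPolynomial (Fin n) K), f ∈ Pge K n 2 →
      ∀ v : Fin n, coeff (Finsupp.single v 1) f = 0 := by
    intro f hf v
    by_contra hne
    have h2 := hf _ (MvPolynomial.mem_support_iff.mpr hne)
    rw [Finsupp.sum_single_index rfl] at h2
    omega
  constructor
  · intro hmem
    rw [hU, Submodule.mem_span_range_iff_exists_fun] at hmem
    obtain ⟨c, hc⟩ := hmem
    rw [Fintype.sum_sum_type] at hc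
    simp only [Sum.elim_inl, Sum.elim_inr] at hc
    -- Step 1: determine c (Sum.inl k)
    have ha : ∀ k, c (Sum.inl k) = if k = i then (1 : K) else 0 := by
      intro k
      have := congrArg (coeff (Finsupp.single (z k) 1)) hc
      rw [coeff_add, coeff_sum, coeff_sum] at this
      simp only [coeff_smul, coeff_sub, smul_eq_mul] at this
      have hcoeffX : ∀ k' : Fin s,
          coeff (Finsupp.single (z k) 1) (X (z k') : MvPolynomial (Fin n) K)
            = if k' = k then (1 : K) else 0 := by
        intro k'
        rw [coeff_X']
        by_cases hkk : k' = k
        · simp [hkk]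
        · have : z k' ≠ z k := fun he => hkk (hz he)
          rw [if_neg, if_neg hkk]
          intro he
          exact this (by
            have := Finsupp.single_left_injective (α := Fin n) (Nat.one_ne_zero) he
            exact this)
      simp only [hcoeffX, coeff_single_eq_zero _ (hh _), coeff_single_eq_zero _ (hq _),
        sub_zero, mul_zero, Finset.sum_const_zero, add_zero, mul_ite, mul_one] at this
      rw [Finset.sum_ite_eq' Finset.univ k (fun k' => c (Sum.inl k'))] at this
      simp at this
      rw [this]
      rcases eq_or_ne i k with he | he
      · simp [he]
      · rw [if_neg he, if_neg (Ne.symm he)]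
    -- Step 2: rewrite hc
    have hsum1 : ∑ k, c (Sum.inl k) • ((X (z k) : MvPolynomial (Fin n) K) - h k)
        = X (z i) - h i := by
      simp only [ha, ite_smul, one_smul, zero_smul]
      rw [Finset.sum_ite_eq' Finset.univ i]
      simp
    rw [hsum1] at hc
    have hkey : h i = ∑ j, c (Sum.inr j) • q j := by
      have := hc
      linear_combination (norm := module) -this
    -- Step 3: all c (Sum.inr j) = 0
    have hb : ∀ j, c (Sum.inr j) = 0 := by
      by_contra hnb
      push_neg at hnb
      obtain ⟨j1, hj1⟩ := hnb
      set T : Finset (Fin u) := Finset.univ.filter (fun j => c (Sum.inr j) ≠ 0) with hT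
      have hTne : T.Nonempty := ⟨j1, by simp [hT, hj1]⟩
      obtain ⟨j0, hj0T, hj0max⟩ :=
        T.exists_max_image (fun j => toLex (L j)) hTne
      have hj0ne : c (Sum.inr j0) ≠ 0 := by
        simp only [hT, Finset.mem_filter] at hj0T; exact hj0T.2
      have hcoeff : coeff (L j0) (h i) = c (Sum.inr j0) * coeff (L j0) (q j0) := by
        rw [hkey, coeff_sum]
        simp only [coeff_smul, smul_eq_mul]
        rw [Finset.sum_eq_single j0]
        · intro j _ hjne
          by_cases hbj : c (Sum.inr j) = 0
          · simp [hbj]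
          · have hjT : j ∈ T := by simp [hT, hbj]
            have : coeff (L j0) (q j) = 0 := by
              by_contra hne
              have hmem := MvPolynomial.mem_support_iff.mpr hne
              have hle : toLex (L j0) ≤ toLex (L j) := (hL j).2 _ hmem
              have hge : toLex (L j) ≤ toLex (L j0) := hj0max j hjT
              have : L j = L j0 := toLex.injective (le_antisymm hge hle)
              exact hjne (hLinj this)
            simp [this]
        · intro habs
          exact absurd (Finset.mem_univ j0) habs
      have hzero : coeff (L j0) (h i) = 0 :=
        MvPolynomial.notMem_support_iff.mp (hLh i j0)
      rw [hzero] at hcoeff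
      have hq0 : coeff (L j0) (q j0) ≠ 0 := MvPolynomial.mem_support_iff.mp (hL j0).1
      exact hq0 (by
        rcases mul_eq_zero.mp hcoeff.symm with h' | h'
        · exact absurd h' hj0ne
        · exact h')
    rw [hkey]
    simp [hb]
  · intro hi
    rw [hU]
    have : (X (z i) : MvPolynomial (Fin n) K)
        = Sum.elim (fun k => (X (z k) : MvPolynomial (Fin n) K) - h k) q (Sum.inl i) := by
      simp [hi]
    rw [this]
    exact Submodule.subset_span ⟨Sum.inl i, rfl⟩
end

section
/- Let I be a proper ideal of P = K[x_1,...,x_n], let Z = (z_1,...,z_s) be a tuple of distinct indeterminates, and let F = (f_1,...,f_s) be a tuple of polynomials in I with f_i = z_i - h_i where h_i ∈ K[X\Z] (no indeterminate of Z divides any term of h_i). Then the K-algebra homomorphism φ: P → K[X\Z] defined by z_i ↦ h_i and x_j ↦ x_j for x_j ∉ Z induces a K-algebra isomorphism P/I ≅ K[X\Z]/(I ∩ K[X\Z]). -/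
/-!
The substitution `z_i ↦ h_i` is a retraction of `P` onto `K[X∖Z]`, and it is the identity
modulo `I` because `z_i ≡ h_i (mod I)`. Any retraction `r : A → S` onto a subalgebra that is the
identity modulo `I` induces a surjection `A → S ⧸ (I ∩ S)` with kernel `I`, hence
`A ⧸ I ≃ S ⧸ (I ∩ S)`.
-/

open MvPolynomial

namespace Ideal

variable {R A : Type*} [CommRing R] [CommRing A] [Algebra R A] {S : Subalgebra R A}
  {I : Ideal A} (r : A →ₐ[R] S)

noncomputable def quotientEquivOfRetraction (hr : ∀ s : S, r s = s)
    (hrI : ∀ a, Quotient.mk I (r a) = Quotient.mk I a) :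
    (A ⧸ I) ≃ₐ[R] S ⧸ I.comap S.val :=
  have hker : I = RingHom.ker ((Quotient.mkₐ R (I.comap S.val)).comp r) := by
    ext a
    rw [RingHom.mem_ker, AlgHom.comp_apply, Quotient.mkₐ_eq_mk, Quotient.eq_zero_iff_mem,
      mem_comap, Subalgebra.coe_val, ← Quotient.eq_zero_iff_mem (a := (r a : A)), hrI,
      Quotient.eq_zero_iff_mem]
  have hsurj : Function.Surjective ((Quotient.mkₐ R (I.comap S.val)).comp r) :=
    (Quotient.mkₐ_surjective R _).comp fun s => ⟨s, hr s⟩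
  (quotientEquivAlgOfEq R hker).trans (quotientKerAlgEquivOfSurjective hsurj)

@[simp]
theorem quotientEquivOfRetraction_mk (hr : ∀ s : S, r s = s)
    (hrI : ∀ a, Quotient.mk I (r a) = Quotient.mk I a) (a : A) :
    quotientEquivOfRetraction r hr hrI (Quotient.mk I a) = Quotient.mk _ (r a) :=
  rfl

end Ideal

namespace MvPolynomial

variable {σ R : Type*} [CommRing R] {s : Set σ} {v : σ → MvPolynomial σ R}

theorem aeval_mem_supported (hv : ∀ j, v j ∈ supported R s) (p : MvPolynomial σ R) :
    aeval v p ∈ supported R s := by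
  have hp : aeval v p ∈ Algebra.adjoin R (Set.range v) := by
    rw [Algebra.adjoin_range_eq_range_aeval]
    exact ⟨p, rfl⟩
  exact Algebra.adjoin_le (Set.range_subset_iff.mpr hv) hp

theorem aeval_eq_self_of_mem_supported (hv : ∀ j ∈ s, v j = X j) {p : MvPolynomial σ R}
    (hp : p ∈ supported R s) : aeval v p = p :=
  (AlgHom.eqOn_adjoin_iff (ψ := AlgHom.id R _)).mpr
    (by rintro _ ⟨j, hj, rfl⟩; simp [hv j hj]) hp

theorem quotientMk_aeval_of_X_sub_mem {I : Ideal (MvPolynomial σ R)} (hv : ∀ j, X j - v j ∈ I)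
    (p : MvPolynomial σ R) : Ideal.Quotient.mk I (aeval v p) = Ideal.Quotient.mk I p := by
  have h : (Ideal.Quotient.mkₐ R I).comp (aeval v) = Ideal.Quotient.mkₐ R I :=
    algHom_ext fun j => by simpa using (Ideal.Quotient.eq.mpr (hv j)).symm
  exact congrArg (· p) h

end MvPolynomial

theorem Z_separating_reembedding_general {K : Type*} [Field K] {n s : ℕ}
    (z : Fin s → Fin n)
    (I : Ideal (MvPolynomial (Fin n) K))
    (h : Fin s → MvPolynomial (Fin n) K)
    (hh : ∀ i, h i ∈ MvPolynomial.supported K ((Set.range z)ᶜ))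
    (hf : ∀ i, (X (z i) : MvPolynomial (Fin n) K) - h i ∈ I)
    (v : Fin n → MvPolynomial (Fin n) K)
    (hv1 : ∀ i, v (z i) = h i) (hv2 : ∀ j, j ∉ Set.range z → v j = X j) :
    ∃ hφS : ∀ p : MvPolynomial (Fin n) K,
        aeval v p ∈ MvPolynomial.supported K ((Set.range z)ᶜ),
      ∃ Φ : (MvPolynomial (Fin n) K ⧸ I) ≃ₐ[K]
          ((MvPolynomial.supported K ((Set.range z)ᶜ)) ⧸
            Ideal.comap (MvPolynomial.supported K ((Set.range z)ᶜ)).val I),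
        ∀ p : MvPolynomial (Fin n) K,
          Φ (Ideal.Quotient.mk I p) =
            Ideal.Quotient.mk
              (Ideal.comap (MvPolynomial.supported K ((Set.range z)ᶜ)).val I)
              ⟨aeval v p, hφS p⟩ := by
  have hv : ∀ j, v j ∈ supported K (Set.range z)ᶜ := by
    intro j
    by_cases hj : j ∈ Set.range z
    · obtain ⟨i, rfl⟩ := hj
      exact hv1 i ▸ hh i
    · exact hv2 j hj ▸ X_mem_supported.mpr hj
  have hXv : ∀ j, X j - v j ∈ I := by
    intro j
    by_cases hj : j ∈ Set.range z
    · obtain ⟨i, rfl⟩ := hj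
      exact hv1 i ▸ hf i
    · simp [hv2 j hj]
  let r := (aeval v).codRestrict _ (aeval_mem_supported hv)
  have hr : ∀ q : supported K (Set.range z)ᶜ, r q = q := fun q =>
    Subtype.ext (aeval_eq_self_of_mem_supported hv2 q.2)
  exact ⟨aeval_mem_supported hv, Ideal.quotientEquivOfRetraction r hr
    (quotientMk_aeval_of_X_sub_mem hXv), Ideal.quotientEquivOfRetraction_mk r hr _⟩

/-- A coherently `Z`-separating tuple `(X (z i) - h i)` in a proper ideal `I`
yields, via the substitution `z_i ↦ h_i`, a `K`-algebra isomorphism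
`P/I ≅ K[X∖Z]/(I ∩ K[X∖Z])`. -/
theorem Z_separating_reembedding {K : Type*} [Field K] {n s : ℕ}
    (z : Fin s → Fin n) (hz : Function.Injective z)
    (I : Ideal (MvPolynomial (Fin n) K)) (hI : I ≠ ⊤)
    (h : Fin s → MvPolynomial (Fin n) K)
    (hh : ∀ i, h i ∈ MvPolynomial.supported K ((Set.range z)ᶜ))
    (hf : ∀ i, (X (z i) : MvPolynomial (Fin n) K) - h i ∈ I)
    (v : Fin n → MvPolynomial (Fin n) K)
    (hv1 : ∀ i, v (z i) = h i) (hv2 : ∀ j, j ∉ Set.range z → v j = X j) :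
    ∃ hφS : ∀ p : MvPolynomial (Fin n) K,
        aeval v p ∈ MvPolynomial.supported K ((Set.range z)ᶜ),
      ∃ Φ : (MvPolynomial (Fin n) K ⧸ I) ≃ₐ[K]
          ((MvPolynomial.supported K ((Set.range z)ᶜ)) ⧸
            Ideal.comap (MvPolynomial.supported K ((Set.range z)ᶜ)).val I),
        ∀ p : MvPolynomial (Fin n) K,
          Φ (Ideal.Quotient.mk I p) =
            Ideal.Quotient.mk
              (Ideal.comap (MvPolynomial.supported K ((Set.range z)ᶜ)).val I)
              ⟨aeval v p, hφS p⟩ :=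
  Z_separating_reembedding_general z I h hh hf v hv1 hv2
end

section
/- Let σ be a term ordering on P = K[x_1,...,x_n] and let J = ⟨f_1,...,f_s⟩ where LT_σ(f_i) = z_i for distinct indeterminates z_1,...,z_s and each f_i is monic. Then {f_1,...,f_s} is a σ-Gröbner basis of J, i.e., the leading term ideal LT_σ(J) is generated by z_1,...,z_s. -/
open MvPolynomial

/-- A term ordering on the monomials (exponent tuples) of `K[x_1,…,x_n]`:
a linear order compatible with addition of exponents, with `1` (exponent `0`) least. -/
structure TermOrder (n : ℕ) where
  le : (Fin n →₀ ℕ) → (Fin n →₀ ℕ) → Prop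
  total : ∀ a b, le a b ∨ le b a
  antisymm : ∀ a b, le a b → le b a → a = b
  trans : ∀ a b c, le a b → le b c → le a c
  add_le_add : ∀ a b c, le a b → le (a + c) (b + c)
  zero_le : ∀ a, le 0 a

/-- `d` is the exponent of the leading term of `f` with respect to `σ`. -/
def IsLeadingTerm {n : ℕ} {K : Type*} [CommSemiring K] (σ : TermOrder n)
    (f : MvPolynomial (Fin n) K) (d : Fin n →₀ ℕ) : Prop :=
  d ∈ f.support ∧ ∀ d' ∈ f.support, σ.le d' d

namespace GBaux

variable {K : Type*} [Field K] {n s : ℕ}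

/-- strict version of the term order -/
def slt (σ : TermOrder n) (a b : Fin n →₀ ℕ) : Prop := σ.le a b ∧ a ≠ b

theorem le_refl (σ : TermOrder n) (a : Fin n →₀ ℕ) : σ.le a a := (σ.total a a).elim id id

theorem le_mono (σ : TermOrder n) {a b : Fin n →₀ ℕ} (h : a ≤ b) : σ.le a b := by
  obtain ⟨c, rfl⟩ := le_iff_exists_add.mp h
  simpa [add_comm] using σ.add_le_add 0 c a (σ.zero_le c)

theorem slt_of_le_of_slt (σ : TermOrder n) {a b c : Fin n →₀ ℕ}
    (h1 : σ.le a b) (h2 : slt σ b c) : slt σ a c := by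
  refine ⟨σ.trans _ _ _ h1 h2.1, fun hac => h2.2 ?_⟩
  subst hac
  exact σ.antisymm _ _ h2.1 h1

theorem slt_of_slt_of_le (σ : TermOrder n) {a b c : Fin n →₀ ℕ}
    (h1 : slt σ a b) (h2 : σ.le b c) : slt σ a c := by
  refine ⟨σ.trans _ _ _ h1.1 h2, fun hac => h1.2 ?_⟩
  subst hac
  exact σ.antisymm _ _ h1.1 h2

theorem slt_trans (σ : TermOrder n) {a b c : Fin n →₀ ℕ}
    (h1 : slt σ a b) (h2 : slt σ b c) : slt σ a c :=
  slt_of_le_of_slt σ h1.1 h2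

theorem add_le_add' (σ : TermOrder n) {a b c d : Fin n →₀ ℕ}
    (h1 : σ.le a b) (h2 : σ.le c d) : σ.le (a + c) (b + d) := by
  have t1 : σ.le (a + c) (b + c) := σ.add_le_add _ _ _ h1
  have t2 : σ.le (c + b) (d + b) := σ.add_le_add _ _ _ h2
  rw [add_comm c b, add_comm d b] at t2
  exact σ.trans _ _ _ t1 t2

theorem add_slt (σ : TermOrder n) {a b c d : Fin n →₀ ℕ}
    (h1 : slt σ a b) (h2 : σ.le c d) : slt σ (a + c) (b + d) := by
  refine ⟨add_le_add' σ h1.1 h2, fun h => h1.2 ?_⟩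
  -- from a + c = b + d, a ⪯ b, c ⪯ d deduce a = b
  have hb : σ.le (b + d) (a + d) := by
    rw [← h]
    exact add_le_add' σ (le_refl σ a) h2
  have ha : σ.le (a + d) (b + d) := σ.add_le_add _ _ _ h1.1
  have := σ.antisymm _ _ ha hb
  exact add_right_cancel this

open Classical in
/-- measure used for the recursion defining the substitution map -/
noncomputable def mea (σ : TermOrder n) (x : Fin n) : ℕ :=
  (Finset.univ.filter
    (fun w : Fin n => slt σ (Finsupp.single w 1) (Finsupp.single x 1))).card

theorem mea_lt (σ : TermOrder n) {y x : Fin n}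
    (h : slt σ (Finsupp.single y 1) (Finsupp.single x 1)) : mea σ y < mea σ x := by
  classical
  unfold mea
  refine Finset.card_lt_card ⟨fun w hw => ?_, fun hsub => ?_⟩
  · simp only [Finset.mem_filter, Finset.mem_univ, true_and] at hw ⊢
    exact slt_trans σ hw h
  · have hy := hsub (Finset.mem_filter.mpr ⟨Finset.mem_univ y, h⟩)
    exact (Finset.mem_filter.mp hy).2.2 rfl

/-- The substitution map: `z i ↦` minus the tail of `f i` (recursively substituted),
other variables map to themselves. -/
noncomputable def subVar (σ : TermOrder n) (z : Fin s → Fin n)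
    (f : Fin s → MvPolynomial (Fin n) K)
    (hLT : ∀ i, IsLeadingTerm σ (f i) (Finsupp.single (z i) 1)) :
    Fin n → MvPolynomial (Fin n) K :=
  fun x =>
    if h : ∃ i, z i = x then
      - ∑ e ∈ ((f h.choose).support.erase (Finsupp.single x 1)).attach,
          C (coeff e.1 (f h.choose)) *
            ∏ y ∈ e.1.support.attach, subVar σ z f hLT y.1 ^ e.1 y.1
    else X x
termination_by x => mea σ x
decreasing_by
  · rename_i x
    apply mea_lt
    have hx : z h.choose = x := h.choose_spec
    have he : e.1 ∈ (f h.choose).support.erase (Finsupp.single x 1) := e.2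
    have hene : e.1 ≠ Finsupp.single x 1 := (Finset.mem_erase.mp he).1
    have hes : e.1 ∈ (f h.choose).support := (Finset.mem_erase.mp he).2
    have hle : σ.le e.1 (Finsupp.single x 1) := by
      have := (hLT h.choose).2 e.1 hes
      rwa [hx] at this
    have hylee : σ.le (Finsupp.single y.1 1) e.1 := by
      apply le_mono
      rw [Finsupp.single_le_iff]
      have := y.2
      simp only [Finsupp.mem_support_iff] at this
      omega
    exact slt_of_le_of_slt σ hylee ⟨hle, hene⟩

variable (σ : TermOrder n) (z : Fin s → Fin n) (f : Fin s → MvPolynomial (Fin n) K)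
  (hLT : ∀ i, IsLeadingTerm σ (f i) (Finsupp.single (z i) 1))

theorem subVar_not_z {x : Fin n} (hx : ¬∃ i, z i = x) :
    subVar σ z f hLT x = X x := by
  rw [subVar, dif_neg hx]

theorem subVar_z (hz : Function.Injective z) (i : Fin s) :
    subVar σ z f hLT (z i) =
      - ∑ e ∈ ((f i).support.erase (Finsupp.single (z i) 1)),
          C (coeff e (f i)) * ∏ y ∈ e.support, subVar σ z f hLT y ^ e y := by
  rw [subVar]
  have h : ∃ j, z j = z i := ⟨i, rfl⟩
  rw [dif_pos h]
  have hch : h.choose = i := hz h.choose_spec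
  rw [hch]
  congr 1
  rw [Finset.sum_attach _ (fun e => C (coeff e (f i)) *
      ∏ y ∈ e.support.attach, subVar σ z f hLT y.1 ^ e y.1)]
  apply Finset.sum_congr rfl
  intro e _
  congr 1
  exact Finset.prod_attach _ (fun y => subVar σ z f hLT y ^ e y)

theorem mem_support_one {e : Fin n →₀ ℕ} (he : e ∈ (1 : MvPolynomial (Fin n) K).support) :
    e = 0 := by
  rw [show (1 : MvPolynomial (Fin n) K) = MvPolynomial.monomial 0 1 by
        rw [← MvPolynomial.C_apply, MvPolynomial.C_1]] at he
  simpa using MvPolynomial.support_monomial_subset he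

theorem mem_support_C {c : K} {e : Fin n →₀ ℕ}
    (he : e ∈ (MvPolynomial.C c : MvPolynomial (Fin n) K).support) : e = 0 := by
  rw [MvPolynomial.C_apply] at he
  simpa using MvPolynomial.support_monomial_subset he

/-- all exponents of `p` are `σ`-at most `a` -/
def Bnd (σ : TermOrder n) (p : MvPolynomial (Fin n) K) (a : Fin n →₀ ℕ) : Prop :=
  ∀ e ∈ p.support, σ.le e a

/-- all exponents of `p` are `σ`-strictly below `a` -/
def BndLt (σ : TermOrder n) (p : MvPolynomial (Fin n) K) (a : Fin n →₀ ℕ) : Prop :=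
  ∀ e ∈ p.support, slt σ e a

theorem Bnd.mul {σ : TermOrder n} {p q : MvPolynomial (Fin n) K} {a b : Fin n →₀ ℕ}
    (hp : Bnd σ p a) (hq : Bnd σ q b) : Bnd σ (p * q) (a + b) := by
  intro e he
  obtain ⟨e1, h1, e2, h2, rfl⟩ := Finset.mem_add.mp (support_mul p q he)
  exact add_le_add' σ (hp e1 h1) (hq e2 h2)

theorem BndLt.mul_bnd {σ : TermOrder n} {p q : MvPolynomial (Fin n) K} {a b : Fin n →₀ ℕ}
    (hp : BndLt σ p a) (hq : Bnd σ q b) : BndLt σ (p * q) (a + b) := by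
  intro e he
  obtain ⟨e1, h1, e2, h2, rfl⟩ := Finset.mem_add.mp (support_mul p q he)
  exact add_slt σ (hp e1 h1) (hq e2 h2)

theorem Bnd.pow {σ : TermOrder n} {p : MvPolynomial (Fin n) K} {a : Fin n →₀ ℕ}
    (hp : Bnd σ p a) (k : ℕ) : Bnd σ (p ^ k) (k • a) := by
  induction k with
  | zero =>
    intro e he
    simp only [pow_zero, zero_smul]
    rw [pow_zero] at he
    rw [mem_support_one he]
    exact le_refl σ 0
  | succ m ih =>
    rw [pow_succ, succ_nsmul]
    exact Bnd.mul ih hp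

theorem BndLt.pow {σ : TermOrder n} {p : MvPolynomial (Fin n) K} {a : Fin n →₀ ℕ}
    (hp : BndLt σ p a) {k : ℕ} (hk : 1 ≤ k) : BndLt σ (p ^ k) (k • a) := by
  obtain ⟨m, rfl⟩ := Nat.exists_eq_add_of_le hk
  rw [pow_add, pow_one, add_smul, one_smul]
  have hb : Bnd σ (p ^ m) (m • a) := Bnd.pow (fun e he => (hp e he).1) m
  exact BndLt.mul_bnd hp hb

theorem Bnd.neg {σ : TermOrder n} {p : MvPolynomial (Fin n) K} {a : Fin n →₀ ℕ}
    (hp : Bnd σ p a) : Bnd σ (-p) a := by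
  intro e he
  rw [MvPolynomial.support_neg] at he
  exact hp e he

theorem BndLt.neg {σ : TermOrder n} {p : MvPolynomial (Fin n) K} {a : Fin n →₀ ℕ}
    (hp : BndLt σ p a) : BndLt σ (-p) a := by
  intro e he
  rw [MvPolynomial.support_neg] at he
  exact hp e he

theorem bnd_C {σ : TermOrder n} (c : K) : Bnd σ (C c : MvPolynomial (Fin n) K) 0 := by
  intro e he
  rw [mem_support_C he]
  exact le_refl σ 0

theorem Bnd.sum {σ : TermOrder n} {ι : Type*} {t : Finset ι}
    {g : ι → MvPolynomial (Fin n) K} {a : Fin n →₀ ℕ}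
    (h : ∀ i ∈ t, Bnd σ (g i) a) : Bnd σ (∑ i ∈ t, g i) a := by
  classical
  induction t using Finset.induction_on with
  | empty => intro e he; simp at he
  | insert x t' hnot ih =>
    rw [Finset.sum_insert hnot]
    intro e he
    have := MvPolynomial.support_add he
    rw [Finset.mem_union] at this
    rcases this with h1 | h2
    · exact h x (Finset.mem_insert_self x t') e h1
    · exact ih (fun i hi => h i (Finset.mem_insert_of_mem hi)) e h2

theorem BndLt.sum {σ : TermOrder n} {ι : Type*} {t : Finset ι}
    {g : ι → MvPolynomial (Fin n) K} {a : Fin n →₀ ℕ}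
    (h : ∀ i ∈ t, BndLt σ (g i) a) : BndLt σ (∑ i ∈ t, g i) a := by
  classical
  induction t using Finset.induction_on with
  | empty => intro e he; simp at he
  | insert x t' hnot ih =>
    rw [Finset.sum_insert hnot]
    intro e he
    have := MvPolynomial.support_add he
    rw [Finset.mem_union] at this
    rcases this with h1 | h2
    · exact h x (Finset.mem_insert_self x t') e h1
    · exact ih (fun i hi => h i (Finset.mem_insert_of_mem hi)) e h2

theorem Bnd.prod {σ : TermOrder n} {ι : Type*} {t : Finset ι}
    {g : ι → MvPolynomial (Fin n) K} {b : ι → (Fin n →₀ ℕ)}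
    (h : ∀ i ∈ t, Bnd σ (g i) (b i)) :
    Bnd σ (∏ i ∈ t, g i) (∑ i ∈ t, b i) := by
  classical
  induction t using Finset.induction_on with
  | empty =>
    intro e he
    simp only [Finset.prod_empty, Finset.sum_empty]
    rw [Finset.prod_empty] at he
    rw [mem_support_one he]
    exact le_refl σ 0
  | insert x t' hnot ih =>
    rw [Finset.prod_insert hnot, Finset.sum_insert hnot]
    exact Bnd.mul (h x (Finset.mem_insert_self x t'))
      (ih (fun i hi => h i (Finset.mem_insert_of_mem hi)))

/-- the sum of the single-variable exponents reconstructs the exponent -/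
theorem sum_single_support (e : Fin n →₀ ℕ) :
    ∑ y ∈ e.support, (e y) • Finsupp.single y 1 = e := by
  have : ∀ y, (e y) • Finsupp.single y (1 : ℕ) = Finsupp.single y (e y) := by
    intro y
    rw [Finsupp.smul_single, smul_eq_mul, mul_one]
  calc ∑ y ∈ e.support, (e y) • Finsupp.single y 1
      = ∑ y ∈ e.support, Finsupp.single y (e y) := by
        apply Finset.sum_congr rfl; intro y _; exact this y
    _ = e := Finsupp.sum_single e

/-- Main bound: all terms of `subVar x` are `σ`-at most `x`, strictly below if `x`
is one of the `z i`. -/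
theorem subVar_bnd (hz : Function.Injective z) (x : Fin n) :
    Bnd σ (subVar σ z f hLT x) (Finsupp.single x 1) ∧
    ((∃ i, z i = x) → BndLt σ (subVar σ z f hLT x) (Finsupp.single x 1)) := by
  have H : ∀ N x, mea σ x < N →
      Bnd σ (subVar σ z f hLT x) (Finsupp.single x 1) ∧
      ((∃ i, z i = x) → BndLt σ (subVar σ z f hLT x) (Finsupp.single x 1)) := by
    intro N
    induction N with
    | zero => intro x hx; omega
    | succ N ih =>
      intro x hx
      by_cases h : ∃ i, z i = x
      · have hlt : BndLt σ (subVar σ z f hLT x) (Finsupp.single x 1) := by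
          obtain ⟨i, rfl⟩ := h
          rw [subVar_z σ z f hLT hz i]
          apply BndLt.neg
          apply BndLt.sum
          intro e he
          have hes : e ∈ (f i).support := (Finset.mem_erase.mp he).2
          have hene : e ≠ Finsupp.single (z i) 1 := (Finset.mem_erase.mp he).1
          have helt : slt σ e (Finsupp.single (z i) 1) := ⟨(hLT i).2 e hes, hene⟩
          have hb : Bnd σ (C (coeff e (f i)) *
              ∏ y ∈ e.support, subVar σ z f hLT y ^ e y) (0 + e) := by
            apply Bnd.mul (bnd_C _)
            have hbp : Bnd σ (∏ y ∈ e.support, subVar σ z f hLT y ^ e y)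
                (∑ y ∈ e.support, (e y) • Finsupp.single y 1) := by
              apply Bnd.prod
              intro y hy
              apply Bnd.pow
              apply (ih y ?_).1
              have h1 : σ.le (Finsupp.single y 1) e := by
                apply le_mono
                rw [Finsupp.single_le_iff]
                have := Finsupp.mem_support_iff.mp hy
                omega
              have := mea_lt σ (slt_of_le_of_slt σ h1 helt)
              omega
            rwa [sum_single_support] at hbp
          rw [zero_add] at hb
          intro t ht
          exact slt_of_le_of_slt σ (hb t ht) helt
        exact ⟨fun e he => (hlt e he).1, fun _ => hlt⟩
      · rw [subVar_not_z σ z f hLT h]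
        refine ⟨?_, fun hc => absurd hc h⟩
        intro e he
        rw [MvPolynomial.support_X] at he
        rw [Finset.mem_singleton.mp he]
        exact le_refl σ _
  exact H (mea σ x + 1) x (Nat.lt_succ_self _)

theorem prod_strict (hz : Function.Injective z) {e : Fin n →₀ ℕ} {j : Fin s}
    (hj : z j ∈ e.support) :
    BndLt σ (∏ y ∈ e.support, subVar σ z f hLT y ^ e y) e := by
  rw [← Finset.mul_prod_erase _ _ hj]
  have h1 : BndLt σ (subVar σ z f hLT (z j) ^ e (z j))
      ((e (z j)) • Finsupp.single (z j) 1) := by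
    apply BndLt.pow ((subVar_bnd σ z f hLT hz (z j)).2 ⟨j, rfl⟩)
    have := Finsupp.mem_support_iff.mp hj
    omega
  have h2 : Bnd σ (∏ y ∈ e.support.erase (z j), subVar σ z f hLT y ^ e y)
      (∑ y ∈ e.support.erase (z j), (e y) • Finsupp.single y 1) :=
    Bnd.prod (fun y _ => Bnd.pow (subVar_bnd σ z f hLT hz y).1 _)
  have h3 := BndLt.mul_bnd h1 h2
  rwa [Finset.add_sum_erase e.support (fun y => (e y) • Finsupp.single y 1) hj,
    sum_single_support] at h3

theorem prod_free {e : Fin n →₀ ℕ} (hfree : ∀ y ∈ e.support, ¬∃ i, z i = y) :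
    ∏ y ∈ e.support, subVar σ z f hLT y ^ e y = MvPolynomial.monomial e (1 : K) := by
  calc ∏ y ∈ e.support, subVar σ z f hLT y ^ e y
      = ∏ y ∈ e.support, X y ^ e y :=
        Finset.prod_congr rfl (fun y hy => by rw [subVar_not_z σ z f hLT (hfree y hy)])
    _ = MvPolynomial.monomial e (1 : K) := MvPolynomial.prod_X_pow_eq_monomial

theorem aeval_subVar_f (hz : Function.Injective z)
    (hmonic : ∀ i, MvPolynomial.coeff (Finsupp.single (z i) 1) (f i) = 1) (i : Fin s) :
    aeval (subVar σ z f hLT) (f i) = 0 := by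
  rw [aeval_def, eval₂_eq]
  rw [← Finset.add_sum_erase _ _ (hLT i).1]
  have hterm : algebraMap K (MvPolynomial (Fin n) K)
      (coeff (Finsupp.single (z i) 1) (f i)) *
      ∏ y ∈ (Finsupp.single (z i) (1:ℕ)).support,
        subVar σ z f hLT y ^ (Finsupp.single (z i) (1:ℕ)) y
      = subVar σ z f hLT (z i) := by
    rw [hmonic i, map_one, one_mul,
      Finsupp.support_single_ne_zero (z i) one_ne_zero, Finset.prod_singleton,
      Finsupp.single_eq_same, pow_one]
  rw [hterm]
  have hsum : ∑ e ∈ (f i).support.erase (Finsupp.single (z i) 1),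
      algebraMap K (MvPolynomial (Fin n) K) (coeff e (f i)) *
        ∏ y ∈ e.support, subVar σ z f hLT y ^ e y
      = - subVar σ z f hLT (z i) := by
    rw [subVar_z σ z f hLT hz i, neg_neg]
    apply Finset.sum_congr rfl
    intro e _
    rw [MvPolynomial.algebraMap_eq]
  rw [hsum, add_neg_cancel]

theorem coeff_aeval (hz : Function.Injective z) {d : Fin n →₀ ℕ}
    (hd : ∀ j, d (z j) = 0) {g : MvPolynomial (Fin n) K} (hb : Bnd σ g d) :
    coeff d (aeval (subVar σ z f hLT) g) = coeff d g := by
  rw [aeval_def, eval₂_eq, coeff_sum]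
  have hcong : ∀ e ∈ g.support,
      coeff d (algebraMap K (MvPolynomial (Fin n) K) (coeff e g) *
        ∏ y ∈ e.support, subVar σ z f hLT y ^ e y)
      = if e = d then coeff e g else 0 := by
    intro e he
    rw [MvPolynomial.algebraMap_eq, MvPolynomial.coeff_C_mul]
    by_cases hzd : ∃ j, z j ∈ e.support
    · obtain ⟨j, hj⟩ := hzd
      have hne : e ≠ d := by
        intro hh
        subst hh
        exact (Finsupp.mem_support_iff.mp hj) (hd j)
      rw [if_neg hne]
      have hstrict := prod_strict σ z f hLT hz hj
      have hz0 : coeff d (∏ y ∈ e.support, subVar σ z f hLT y ^ e y) = 0 := by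
        by_contra hcon
        have hdmem : d ∈ (∏ y ∈ e.support, subVar σ z f hLT y ^ e y).support :=
          Finsupp.mem_support_iff.mpr hcon
        have h4 := hstrict d hdmem
        exact hne (σ.antisymm _ _ (hb e he) h4.1)
      rw [hz0, mul_zero]
    · have hfree : ∀ y ∈ e.support, ¬∃ i, z i = y := by
        intro y hy ⟨i, hiy⟩
        exact hzd ⟨i, hiy ▸ hy⟩
      rw [prod_free σ z f hLT hfree, MvPolynomial.coeff_monomial]
      by_cases hed : e = d
      · rw [if_pos hed, if_pos hed, mul_one]
      · rw [if_neg hed, if_neg hed, mul_zero]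
  rw [Finset.sum_congr rfl hcong,
    Finset.sum_ite_eq' g.support d (fun e => coeff e g)]
  by_cases hmem : d ∈ g.support
  · rw [if_pos hmem]
  · rw [if_neg hmem, (MvPolynomial.notMem_support_iff.mp hmem)]

end GBaux

/-- Monic polynomials `f_1,…,f_s` whose leading terms are distinct
indeterminates `z_1,…,z_s` form a `σ`-Gröbner basis of the ideal they generate:
the leading term ideal of `J = ⟨f_1,…,f_s⟩` is generated by `z_1,…,z_s`. -/
theorem groebner_basis_of_indet_leading_terms {K : Type*} [Field K] {n s : ℕ}
    (σ : TermOrder n) (z : Fin s → Fin n) (hz : Function.Injective z)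
    (f : Fin s → MvPolynomial (Fin n) K)
    (hLT : ∀ i, IsLeadingTerm σ (f i) (Finsupp.single (z i) 1))
    (hmonic : ∀ i, MvPolynomial.coeff (Finsupp.single (z i) 1) (f i) = 1)
    (J : Ideal (MvPolynomial (Fin n) K)) (hJ : J = Ideal.span (Set.range f)) :
    Ideal.span {p : MvPolynomial (Fin n) K | ∃ g ∈ J, g ≠ 0 ∧
        ∃ d, IsLeadingTerm σ g d ∧ p = MvPolynomial.monomial d (1 : K)}
      = Ideal.span (Set.range fun i => (X (z i) : MvPolynomial (Fin n) K)) := by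
  classical
  have hker : ∀ g ∈ J, aeval (GBaux.subVar σ z f hLT) g = 0 := by
    intro g hg
    rw [hJ] at hg
    have hle : Ideal.span (Set.range f) ≤ RingHom.ker
        (aeval (GBaux.subVar σ z f hLT) :
          MvPolynomial (Fin n) K →ₐ[K] MvPolynomial (Fin n) K) := by
      rw [Ideal.span_le]
      rintro _ ⟨i, rfl⟩
      exact GBaux.aeval_subVar_f σ z f hLT hz hmonic i
    exact RingHom.mem_ker.mp (hle hg)
  have keyA : ∀ g ∈ J, ∀ d, IsLeadingTerm σ g d → ∃ i, 1 ≤ d (z i) := by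
    intro g hg d hld
    by_contra hcon
    push_neg at hcon
    have hd : ∀ j, d (z j) = 0 := fun j => by have := hcon j; omega
    have h1 := GBaux.coeff_aeval σ z f hLT hz hd (g := g) hld.2
    rw [hker g hg, MvPolynomial.coeff_zero] at h1
    exact MvPolynomial.mem_support_iff.mp hld.1 h1.symm
  apply le_antisymm
  · rw [Ideal.span_le]
    rintro p ⟨g, hg, h0, d, hld, rfl⟩
    simp only [SetLike.mem_coe]
    obtain ⟨i, hi⟩ := keyA g hg d hld
    have hle : Finsupp.single (z i) 1 ≤ d := Finsupp.single_le_iff.mpr hi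
    have hsplit : (MvPolynomial.monomial d (1:K)) =
        MvPolynomial.monomial (d - Finsupp.single (z i) 1) (1:K) * X (z i) := by
      rw [show (X (z i) : MvPolynomial (Fin n) K) =
          MvPolynomial.monomial (Finsupp.single (z i) 1) 1 from rfl,
        MvPolynomial.monomial_mul, mul_one, tsub_add_cancel_of_le hle]
    rw [hsplit]
    exact Ideal.mul_mem_left _ _ (Ideal.subset_span ⟨i, rfl⟩)
  · rw [Ideal.span_le]
    rintro p ⟨i, rfl⟩
    simp only [SetLike.mem_coe]
    apply Ideal.subset_span
    refine ⟨f i, ?_, ?_, Finsupp.single (z i) 1, hLT i, ?_⟩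
    · rw [hJ]; exact Ideal.subset_span ⟨i, rfl⟩
    · intro h0
      have hmem := (hLT i).1
      rw [h0] at hmem
      simp at hmem
    · rfl
end

section
/- Let I' be a proper ideal of P = F_2[X_1,...,X_n] containing the field ideal I_n, let Z' = (Z_1,...,Z_s) be distinct indeterminates, and let F_1,...,F_s ∈ P with LT_σ(F_i) = Z_i for some term ordering σ. Then the residue classes f_i = F_i + I_n satisfy LT_σ(f_i) = z_i in B_n = P/I_n, where LT_σ of a Boolean polynomial is defined via its canonical (square-free) representative; i.e., a Z'-separating tuple of polynomials in I' induces a Z-separating tuple of Boolean polynomials in I = I'/I_n. -/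
open MvPolynomial

/-- The field ideal `⟨X_1²−X_1, …, X_n²−X_n⟩` of `F_2[X_1,…,X_n]`. -/
noncomputable def fieldIdeal (n : ℕ) : Ideal (MvPolynomial (Fin n) (ZMod 2)) :=
  Ideal.span (Set.range fun i => (X i : MvPolynomial (Fin n) (ZMod 2)) ^ 2 - X i)

/-- A polynomial is square-free (as a sum of terms) if all exponents are `≤ 1`. -/
def IsSquarefreePoly {n : ℕ} (F : MvPolynomial (Fin n) (ZMod 2)) : Prop :=
  ∀ d ∈ F.support, ∀ i, d i ≤ 1

/-! ### Auxiliary material -/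

/-- Squarefree truncation of an exponent tuple. -/
noncomputable def sqExp {n : ℕ} (d : Fin n →₀ ℕ) : Fin n →₀ ℕ :=
  Finsupp.mapRange (fun k => min k 1) rfl d

lemma sqExp_apply {n : ℕ} (d : Fin n →₀ ℕ) (i : Fin n) : sqExp d i = min (d i) 1 :=
  Finsupp.mapRange_apply

/-- Any pointwise-dominating exponent is `σ`-larger. -/
lemma termOrder_le_of_le {n : ℕ} (σ : TermOrder n) {a b : Fin n →₀ ℕ}
    (h : ∀ i, a i ≤ b i) : σ.le a b := by
  have hb : b = (b - a) + a := by
    ext i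
    simp [Finsupp.tsub_apply, Nat.sub_add_cancel (h i)]
  have := σ.add_le_add 0 (b - a) a (σ.zero_le _)
  rw [zero_add] at this
  rw [hb]
  exact this

lemma sqExp_termOrder_le {n : ℕ} (σ : TermOrder n) (d : Fin n →₀ ℕ) :
    σ.le (sqExp d) d :=
  termOrder_le_of_le σ fun i => by rw [sqExp_apply]; exact min_le_left _ _

lemma mk_X_pow {n : ℕ} (i : Fin n) {k : ℕ} (hk : 1 ≤ k) :
    Ideal.Quotient.mk (fieldIdeal n) ((X i : MvPolynomial (Fin n) (ZMod 2)) ^ k)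
      = Ideal.Quotient.mk (fieldIdeal n) (X i) := by
  have hsq : Ideal.Quotient.mk (fieldIdeal n) ((X i : MvPolynomial (Fin n) (ZMod 2)) ^ 2)
      = Ideal.Quotient.mk (fieldIdeal n) (X i) := by
    rw [Ideal.Quotient.eq]
    exact Ideal.subset_span ⟨i, rfl⟩
  induction k, hk using Nat.le_induction with
  | base => simp
  | succ m hm ih =>
      have : (X i : MvPolynomial (Fin n) (ZMod 2)) ^ (m + 1) = X i ^ m * X i := by ring
      rw [this, map_mul, ih, ← map_mul, ← sq, hsq]

lemma mk_monomial_sqExp {n : ℕ} (d : Fin n →₀ ℕ) (c : ZMod 2) :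
    Ideal.Quotient.mk (fieldIdeal n) (monomial d c)
      = Ideal.Quotient.mk (fieldIdeal n) (monomial (sqExp d) c) := by
  rw [monomial_eq, monomial_eq, map_mul, map_mul]
  congr 1
  rw [Finsupp.prod_fintype _ _ (fun i => pow_zero _),
    Finsupp.prod_fintype _ _ (fun i => pow_zero _), map_prod, map_prod]
  apply Finset.prod_congr rfl
  intro i _
  rw [sqExp_apply]
  rcases Nat.eq_zero_or_pos (d i) with h | h
  · simp [h]
  · rw [mk_X_pow i h, mk_X_pow i (by omega : 1 ≤ min (d i) 1)]

/-- The squarefree reduction of a polynomial. -/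
noncomputable def redPoly {n : ℕ} (F : MvPolynomial (Fin n) (ZMod 2)) :
    MvPolynomial (Fin n) (ZMod 2) :=
  ∑ d ∈ F.support, monomial (sqExp d) (coeff d F)

lemma mk_redPoly {n : ℕ} (F : MvPolynomial (Fin n) (ZMod 2)) :
    Ideal.Quotient.mk (fieldIdeal n) (redPoly F) = Ideal.Quotient.mk (fieldIdeal n) F := by
  conv_rhs => rw [F.as_sum]
  rw [redPoly, map_sum, map_sum]
  exact Finset.sum_congr rfl fun d _ => (mk_monomial_sqExp d _).symm

lemma coeff_redPoly {n : ℕ} (F : MvPolynomial (Fin n) (ZMod 2)) (e : Fin n →₀ ℕ) :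
    coeff e (redPoly F) = ∑ d ∈ F.support, if sqExp d = e then coeff d F else 0 := by
  rw [redPoly, coeff_sum]
  exact Finset.sum_congr rfl fun d _ => coeff_monomial e (sqExp d) _

lemma redPoly_squarefree {n : ℕ} (F : MvPolynomial (Fin n) (ZMod 2)) :
    IsSquarefreePoly (redPoly F) := by
  intro e he i
  rw [mem_support_iff, coeff_redPoly] at he
  obtain ⟨d, _, hd⟩ := Finset.exists_ne_zero_of_sum_ne_zero he
  have : sqExp d = e := by by_contra h; simp [h] at hd
  rw [← this, sqExp_apply]
  exact min_le_right _ _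

lemma redPoly_support_le {n : ℕ} (σ : TermOrder n) (F : MvPolynomial (Fin n) (ZMod 2))
    {e : Fin n →₀ ℕ} (hLT : IsLeadingTerm σ F e) :
    ∀ d' ∈ (redPoly F).support, σ.le d' e := by
  intro d' hd'
  rw [mem_support_iff, coeff_redPoly] at hd'
  obtain ⟨d, hdmem, hd⟩ := Finset.exists_ne_zero_of_sum_ne_zero hd'
  have hsq : sqExp d = d' := by by_contra h; simp [h] at hd
  exact σ.trans _ _ _ (hsq ▸ sqExp_termOrder_le σ d) (hLT.2 d hdmem)

/-- Evaluation of a generator of the field ideal vanishes on points of `{0,1}^n`. -/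
lemma eval_zero_of_mem_fieldIdeal {n : ℕ} {P : MvPolynomial (Fin n) (ZMod 2)}
    (hP : P ∈ fieldIdeal n) (x : Fin n → ZMod 2) : eval x P = 0 := by
  have : fieldIdeal n ≤ RingHom.ker (eval x) := by
    rw [fieldIdeal, Ideal.span_le]
    rintro _ ⟨i, rfl⟩
    simp only [SetLike.mem_coe, RingHom.mem_ker, map_sub, map_pow, eval_X]
    have : ∀ a : ZMod 2, a ^ 2 - a = 0 := by decide
    exact this _
  exact this hP

lemma squarefree_exp_eq {n : ℕ} {d d' : Fin n →₀ ℕ} (hd : ∀ i, d i ≤ 1)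
    (hd' : ∀ i, d' i ≤ 1) (h : d.support = d'.support) : d = d' := by
  ext i
  by_cases hi : i ∈ d.support
  · have hi' : i ∈ d'.support := h ▸ hi
    rw [Finsupp.mem_support_iff] at hi hi'
    have := hd i; have := hd' i
    omega
  · have hi' : i ∉ d'.support := h ▸ hi
    rw [Finsupp.notMem_support_iff] at hi hi'
    rw [hi, hi']

/-- A squarefree polynomial vanishing on all points of `{0,1}^n` is zero. -/
lemma squarefree_eval_zero {n : ℕ} {D : MvPolynomial (Fin n) (ZMod 2)}
    (hsq : IsSquarefreePoly D) (h : ∀ x : Fin n → ZMod 2, eval x D = 0) : D = 0 := by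
  have key : ∀ S : Finset (Fin n), ∀ d ∈ D.support, d.support ≠ S := by
    intro S
    induction S using Finset.strongInduction with
    | _ S ih =>
      intro d0 hd0 hS
      set x : Fin n → ZMod 2 := fun i => if i ∈ S then 1 else 0 with hx
      have heval := h x
      rw [eval_eq] at heval
      have hterm : ∀ d ∈ D.support,
          coeff d D * ∏ i ∈ d.support, x i ^ d i = if d = d0 then coeff d0 D else 0 := by
        intro d hd
        by_cases hsub : d.support ⊆ S
        · have hdS : d.support = S := by
            by_contra hne
            exact ih d.support (Finset.ssubset_iff_subset_ne.mpr ⟨hsub, hne⟩) d hd rfl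
          have hdd0 : d = d0 :=
            squarefree_exp_eq (hsq d hd) (hsq d0 hd0) (hdS.trans hS.symm)
          have : ∏ i ∈ d.support, x i ^ d i = 1 := by
            apply Finset.prod_eq_one
            intro i hi
            have : x i = 1 := by simp [hx, hdS ▸ hi]
            rw [this, one_pow]
          rw [this, mul_one, if_pos hdd0, hdd0]
        · obtain ⟨i, hiD, hiS⟩ := Finset.not_subset.mp hsub
          have hxi : x i = 0 := by simp [hx, hiS]
          have hdi : d i ≠ 0 := Finsupp.mem_support_iff.mp hiD
          have : ∏ j ∈ d.support, x j ^ d j = 0 :=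
            Finset.prod_eq_zero hiD (by rw [hxi, zero_pow hdi])
          have hne : d ≠ d0 := by
            rintro rfl
            exact hiS (hS ▸ hiD)
          simp [hne, this]
      rw [Finset.sum_congr rfl hterm, Finset.sum_ite_eq' _ d0, if_pos hd0] at heval
      exact (mem_support_iff.mp hd0) heval
  by_contra hD
  obtain ⟨d, hd⟩ := Finset.nonempty_iff_ne_empty.mpr
    (fun hc => hD (support_eq_empty.mp hc))
  exact key d.support d hd rfl

/-- Uniqueness of squarefree representatives modulo the field ideal. -/
lemma squarefree_rep_unique {n : ℕ} {G H : MvPolynomial (Fin n) (ZMod 2)}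
    (hG : IsSquarefreePoly G) (hH : IsSquarefreePoly H)
    (h : Ideal.Quotient.mk (fieldIdeal n) G = Ideal.Quotient.mk (fieldIdeal n) H) :
    G = H := by
  rw [Ideal.Quotient.eq] at h
  have hsub : IsSquarefreePoly (G - H) := by
    intro d hd i
    rcases Finset.mem_union.mp (support_sub _ G H hd) with h' | h'
    · exact hG d h' i
    · exact hH d h' i
  have : G - H = 0 :=
    squarefree_eval_zero hsub fun x => eval_zero_of_mem_fieldIdeal h x
  exact sub_eq_zero.mp this

/-- If `(F_1,…,F_s)` is a `Z'`-separating tuple of polynomials in a proper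
ideal `I' ⊇ I_n`, then the residue classes `f_i = F_i + I_n` form a `Z`-separating tuple of
Boolean polynomials in `I = I'/I_n`: each `f_i` lies in the image ideal, and every
canonical (square-free) representative of `f_i` again has leading term `Z_i`. -/
theorem Zsep_descends_to_boolean {n s : ℕ} (σ : TermOrder n)
    (I' : Ideal (MvPolynomial (Fin n) (ZMod 2))) (hI' : I' ≠ ⊤)
    (hIn : fieldIdeal n ≤ I')
    (Z : Fin s → Fin n) (hZ : Function.Injective Z)
    (F : Fin s → MvPolynomial (Fin n) (ZMod 2)) (hFI : ∀ i, F i ∈ I')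
    (hLT : ∀ i, IsLeadingTerm σ (F i) (Finsupp.single (Z i) 1)) :
    ∀ i, (Ideal.Quotient.mk (fieldIdeal n) (F i) ∈
        Ideal.map (Ideal.Quotient.mk (fieldIdeal n)) I') ∧
      ∀ G : MvPolynomial (Fin n) (ZMod 2), IsSquarefreePoly G →
        Ideal.Quotient.mk (fieldIdeal n) G = Ideal.Quotient.mk (fieldIdeal n) (F i) →
        IsLeadingTerm σ G (Finsupp.single (Z i) 1) := by
  intro i
  refine ⟨Ideal.mem_map_of_mem _ (hFI i), ?_⟩
  intro G hGsq hGmk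
  set e : Fin n →₀ ℕ := Finsupp.single (Z i) 1 with he
  -- G is the squarefree reduction of F i
  have hGred : G = redPoly (F i) := by
    apply squarefree_rep_unique hGsq (redPoly_squarefree (F i))
    rw [hGmk, mk_redPoly]
  -- leading coefficient survives
  have hse : sqExp e = e := by
    have hle : ∀ j, e j ≤ 1 := fun j => by
      rw [he, Finsupp.single_apply]; split <;> omega
    ext j
    rw [sqExp_apply]
    exact min_eq_left (hle j)
  have hmem : e ∈ (redPoly (F i)).support := by
    rw [mem_support_iff, coeff_redPoly]
    have hsingle : ∀ d ∈ (F i).support, d ≠ e → (if sqExp d = e then coeff d (F i) else 0) = 0 := by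
      intro d hd hne
      have : sqExp d ≠ e := by
        intro hsq
        apply hne
        refine σ.antisymm d e ((hLT i).2 d hd) ?_
        exact hsq ▸ sqExp_termOrder_le σ d
      simp [this]
    rw [Finset.sum_eq_single_of_mem e (hLT i).1 hsingle, if_pos hse]
    exact mem_support_iff.mp (hLT i).1
  rw [hGred]
  exact ⟨hmem, redPoly_support_le σ (F i) (hLT i)⟩
end

section
/- Let I be a proper ideal of B_n, let (f_1,...,f_s) be a Z-separating tuple of Boolean polynomials in I with LT_σ(f_i) = z_i, write f_i = z_i + h_i, and let h̃_i be the normal remainder of h_i upon division by (f_1,...,f_s) (together with the field relations) with respect to σ. Then the tuple (z_1 − h̃_1, ..., z_s − h̃_s) consists of elements of I, and no term in the support of any z_i − h̃_i is divisible by z_j for j ≠ i; i.e., it is a coherently Z-separating tuple in I. -/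
open MvPolynomial

/-!
In characteristic 2 we have `z_i - h̃_i = f_i + (h_i - h̃_i)`, and both summands lie in `I`
because `I` contains every `f_j` and the field ideal. The support of `z_i - h̃_i` lies in
`{z_i} ∪ supp h̃_i`, and neither `z_i` (by injectivity of `Z`) nor a term of the fully
reduced `h̃_i` involves `z_j` for `j ≠ i`.
-/

theorem Ideal.sub_mem_of_add_mem_of_sub_mem {R : Type*} [CommRing R] [CharP R 2] {J : Ideal R}
    {x h h' : R} (hxh : x + h ∈ J) (hhh' : h - h' ∈ J) : x - h' ∈ J := by
  have hsum : x - h' = (x + h) + (h - h') := by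
    linear_combination (CharTwo.add_self_eq_zero h).symm
  rw [hsum]
  exact J.add_mem hxh hhh'

theorem MvPolynomial.eq_zero_of_mem_support_X_sub {σ R : Type*} [CommRing R] [DecidableEq σ]
    {k m : σ} (hkm : k ≠ m) {p : MvPolynomial σ R} (hp : ∀ d ∈ p.support, d m = 0) :
    ∀ d ∈ (X k - p).support, d m = 0 := by
  intro d hd
  rcases Finset.mem_union.mp (support_sub σ _ _ hd) with hX | hpd
  · rw [Finset.mem_singleton.mp (support_monomial_subset hX), Finsupp.single_eq_of_ne hkm.symm]
  · exact hp d hpd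

theorem coherently_Zsep_from_normal_remainder_general {n s : ℕ}
    (I' : Ideal (MvPolynomial (Fin n) (ZMod 2)))
    (hIn : fieldIdeal n ≤ I')
    (Z : Fin s → Fin n) (hZ : Function.Injective Z)
    (F : Fin s → MvPolynomial (Fin n) (ZMod 2)) (hFI : ∀ i, F i ∈ I')
    (H : Fin s → MvPolynomial (Fin n) (ZMod 2))
    (hH : ∀ i, F i = X (Z i) + H i)
    (Ht : Fin s → MvPolynomial (Fin n) (ZMod 2))
    (hNR2 : ∀ i, ∀ d ∈ (Ht i).support, ∀ j, d (Z j) = 0)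
    (hNR3 : ∀ i, H i - Ht i ∈ Ideal.span (Set.range F) ⊔ fieldIdeal n) :
    ∀ i, ((X (Z i) : MvPolynomial (Fin n) (ZMod 2)) - Ht i ∈ I') ∧
      ∀ j, j ≠ i →
        ∀ d ∈ ((X (Z i) : MvPolynomial (Fin n) (ZMod 2)) - Ht i).support, d (Z j) = 0 := by
  have hspan : Ideal.span (Set.range F) ⊔ fieldIdeal n ≤ I' :=
    sup_le (Ideal.span_le.mpr (Set.range_subset_iff.mpr hFI)) hIn
  intro i
  refine ⟨Ideal.sub_mem_of_add_mem_of_sub_mem (hH i ▸ hFI i) (hspan (hNR3 i)), ?_⟩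
  intro j hji
  exact eq_zero_of_mem_support_X_sub (hZ.ne hji.symm) fun d hd => hNR2 i d hd j

/-- If `(f_1,…,f_s)` is a `Z`-separating tuple of Boolean polynomials in a
proper ideal `I` (represented by `F_i = X (Z i) + H i ∈ I'` with `LT_σ(F_i) = Z_i`), and
`h̃_i` is the normal remainder of `h_i` on division by `(f_1,…,f_s)` and the field
relations (so `h̃_i` is square-free, fully reduced against the leading terms `z_j`, and
`h_i − h̃_i` lies in `⟨f_1,…,f_s⟩ + I_n`), then `(z_1 − h̃_1, …, z_s − h̃_s)` is a
coherently `Z`-separating tuple in `I`: its entries lie in `I`, and no term of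
`z_i − h̃_i` is divisible by `z_j` for `j ≠ i`. -/
theorem coherently_Zsep_from_normal_remainder {n s : ℕ} (σ : TermOrder n)
    (I' : Ideal (MvPolynomial (Fin n) (ZMod 2))) (hI' : I' ≠ ⊤)
    (hIn : fieldIdeal n ≤ I')
    (Z : Fin s → Fin n) (hZ : Function.Injective Z)
    (F : Fin s → MvPolynomial (Fin n) (ZMod 2)) (hFI : ∀ i, F i ∈ I')
    (hLT : ∀ i, IsLeadingTerm σ (F i) (Finsupp.single (Z i) 1))
    (H : Fin s → MvPolynomial (Fin n) (ZMod 2))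
    (hH : ∀ i, F i = X (Z i) + H i)
    (Ht : Fin s → MvPolynomial (Fin n) (ZMod 2))
    (hNR1 : ∀ i, IsSquarefreePoly (Ht i))
    (hNR2 : ∀ i, ∀ d ∈ (Ht i).support, ∀ j, d (Z j) = 0)
    (hNR3 : ∀ i, H i - Ht i ∈ Ideal.span (Set.range F) ⊔ fieldIdeal n) :
    ∀ i, ((X (Z i) : MvPolynomial (Fin n) (ZMod 2)) - Ht i ∈ I') ∧
      ∀ j, j ≠ i →
        ∀ d ∈ ((X (Z i) : MvPolynomial (Fin n) (ZMod 2)) - Ht i).support, d (Z j) = 0 :=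
  coherently_Zsep_from_normal_remainder_general I' hIn Z hZ F hFI H hH Ht hNR2 hNR3
end

section
/- Let I be a proper ideal in B_n, σ a term ordering, and suppose the reduced Boolean σ-Gröbner basis of I has the form G = {z_1 − h̃_1, ..., z_s − h̃_s, g_1, ..., g_r} with h̃_i, g_j ∈ B_m := F_2[x ∈ X \ Z]. Then the F_2-algebra homomorphism Φ: B_n/I → B_m/(I ∩ B_m) defined by x_i ↦ x_i + (I ∩ B_m) for x_i ∉ Z and z_j ↦ h̃_j + (I ∩ B_m) is an isomorphism of F_2-algebras. -/
open MvPolynomial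

set_option maxHeartbeats 1000000 in
set_option synthInstance.maxHeartbeats 400000 in
/-- If the reduced Boolean `σ`-Gröbner basis of a proper Boolean ideal `I`
has the form `{z_1 − h̃_1, …, z_s − h̃_s, g_1, …, g_r}` with `h̃_i, g_j ∈ B_m`, then the
substitution `z_j ↦ h̃_j`, identity on the other indeterminates, induces an `F_2`-algebra
isomorphism `B_n/I ≅ B_m/(I ∩ B_m)`.  (Here `I` is represented by the ideal
`I' ⊇ I_n` of `F_2[X_1,…,X_n]`, and `B_m/(I ∩ B_m)` by `S/(I' ∩ S)` where `S` is the
subalgebra of polynomials in the indeterminates outside `Z`.) -/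
theorem boolean_Zsep_reembedding {n s r : ℕ} (σ : TermOrder n)
    (I' : Ideal (MvPolynomial (Fin n) (ZMod 2))) (hI' : I' ≠ ⊤)
    (hIn : fieldIdeal n ≤ I')
    (Z : Fin s → Fin n) (hZ : Function.Injective Z)
    (Ht : Fin s → MvPolynomial (Fin n) (ZMod 2))
    (g : Fin r → MvPolynomial (Fin n) (ZMod 2))
    (hHtS : ∀ i, Ht i ∈ MvPolynomial.supported (ZMod 2) ((Set.range Z)ᶜ))
    (hgS : ∀ j, g j ∈ MvPolynomial.supported (ZMod 2) ((Set.range Z)ᶜ))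
    (hsfHt : ∀ i, IsSquarefreePoly (Ht i)) (hsfg : ∀ j, IsSquarefreePoly (g j))
    (hGen : I' = Ideal.span
        ((Set.range fun i => (X (Z i) : MvPolynomial (Fin n) (ZMod 2)) - Ht i) ∪
          Set.range g) ⊔ fieldIdeal n)
    (hGB : ∀ f ∈ I', f ≠ 0 → ∀ d, IsLeadingTerm σ f d →
      (∃ i, Finsupp.single (Z i) 1 ≤ d) ∨
      (∃ j, ∃ e, IsLeadingTerm σ (g j) e ∧ e ≤ d) ∨
      (∃ k, Finsupp.single k 2 ≤ d)) :
    ∃ Φ : (MvPolynomial (Fin n) (ZMod 2) ⧸ I') ≃ₐ[ZMod 2]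
        ((MvPolynomial.supported (ZMod 2) ((Set.range Z)ᶜ)) ⧸
          Ideal.comap (MvPolynomial.supported (ZMod 2) ((Set.range Z)ᶜ)).val I'),
      (∀ p : MvPolynomial.supported (ZMod 2) ((Set.range Z)ᶜ),
        Φ (Ideal.Quotient.mk I' (p : MvPolynomial (Fin n) (ZMod 2))) =
          Ideal.Quotient.mk
            (Ideal.comap (MvPolynomial.supported (ZMod 2) ((Set.range Z)ᶜ)).val I') p) ∧
      (∀ i, Φ (Ideal.Quotient.mk I' (X (Z i))) =
          Ideal.Quotient.mk
            (Ideal.comap (MvPolynomial.supported (ZMod 2) ((Set.range Z)ᶜ)).val I')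
            ⟨Ht i, hHtS i⟩) := by

  classical
  set S := MvPolynomial.supported (ZMod 2) ((Set.range Z)ᶜ) with hS
  set J := Ideal.comap S.val I' with hJ
  -- the composite algebra hom S → B_n/I'
  set ψ : S →ₐ[ZMod 2] (MvPolynomial (Fin n) (ZMod 2) ⧸ I') :=
    (Ideal.Quotient.mkₐ (ZMod 2) I').comp S.val with hψ
  have hψ_apply : ∀ p : S, ψ p = Ideal.Quotient.mk I' (p : MvPolynomial (Fin n) (ZMod 2)) :=
    fun p => rfl
  -- X (Z i) ≡ Ht i mod I'
  have hXZ : ∀ i, Ideal.Quotient.mk I' (X (Z i)) = Ideal.Quotient.mk I' (Ht i) := by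
    intro i
    have hmem : (X (Z i) : MvPolynomial (Fin n) (ZMod 2)) - Ht i ∈ I' := by
      rw [hGen]
      exact Ideal.mem_sup_left (Ideal.subset_span (Or.inl ⟨i, rfl⟩))
    rw [Ideal.Quotient.eq]
    exact hmem
  -- surjectivity of ψ
  have hsurj : Function.Surjective ψ := by
    intro y
    obtain ⟨f, rfl⟩ := Ideal.Quotient.mk_surjective y
    have key : Ideal.Quotient.mk I' f ∈ ψ.range := by
      induction f using MvPolynomial.induction_on with
      | C a =>
        exact ⟨algebraMap (ZMod 2) S a, by simp [hψ_apply, MvPolynomial.algebraMap_eq]⟩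
      | add p q hp hq => rw [map_add]; exact add_mem hp hq
      | mul_X p k hp =>
        rw [map_mul]
        refine mul_mem hp ?_
        by_cases hk : k ∈ Set.range Z
        · obtain ⟨i, rfl⟩ := hk
          rw [hXZ i]
          exact ⟨⟨Ht i, hHtS i⟩, rfl⟩
        · refine ⟨⟨X k, ?_⟩, rfl⟩
          exact MvPolynomial.X_mem_supported.mpr hk
    exact key
  -- lift to the quotient
  have hker : ∀ a : S, a ∈ J → ψ a = 0 := by
    intro a ha
    rw [hψ_apply, Ideal.Quotient.eq_zero_iff_mem]
    exact ha
  set Φ' : (S ⧸ J) →ₐ[ZMod 2] (MvPolynomial (Fin n) (ZMod 2) ⧸ I') :=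
    Ideal.Quotient.liftₐ J ψ hker with hΦ'
  have hΦ'_mk : ∀ p : S, Φ' (Ideal.Quotient.mk J p) = ψ p := fun p => rfl
  have hbij : Function.Bijective Φ' := by
    constructor
    · rw [injective_iff_map_eq_zero]
      intro a ha
      obtain ⟨p, rfl⟩ := Ideal.Quotient.mk_surjective a
      rw [hΦ'_mk, hψ_apply, Ideal.Quotient.eq_zero_iff_mem] at ha
      rw [Ideal.Quotient.eq_zero_iff_mem]
      exact ha
    · intro y
      obtain ⟨p, hp⟩ := hsurj y
      exact ⟨Ideal.Quotient.mk J p, hp⟩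
  refine ⟨(AlgEquiv.ofBijective Φ' hbij).symm, ?_, ?_⟩
  · intro p
    rw [AlgEquiv.symm_apply_eq]
    exact ((hΦ'_mk p).trans (hψ_apply p)).symm
  · intro i
    rw [AlgEquiv.symm_apply_eq]
    show _ = Φ' (Ideal.Quotient.mk J ⟨Ht i, hHtS i⟩)
    rw [hΦ'_mk, hψ_apply, hXZ i]
end

section
/- Let I be a proper ideal of B_n admitting a coherently Z-separating tuple (f_1,...,f_s) with respect to a term ordering σ, where f_i = z_i − h_i and h_i ∈ B_m = F_2[X\Z]. Then for every elimination ordering τ for Z, the ideal generated by z_1,...,z_s is contained in the leading term ideal LT_τ(I). -/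
open MvPolynomial

/-!
Each generator `f_i = z_i - h_i` of the separating tuple already has leading term `z_i` under
any elimination ordering for `Z`: the terms of `h_i` avoid every `z_j`, so they are smaller than
`z_i`, and they cannot cancel `z_i`. Since `f_i` is square-free, it is its own canonical
representative, so `z_i ∈ LT_τ(I)`.
-/

variable {n : ℕ}

lemma TermOrder.le_refl (τ : TermOrder n) (d : Fin n →₀ ℕ) : τ.le d d :=
  (τ.total d d).elim id id

lemma IsLeadingTerm.ne_zero {K : Type*} [CommSemiring K] {τ : TermOrder n}
    {f : MvPolynomial (Fin n) K} {d : Fin n →₀ ℕ} (h : IsLeadingTerm τ f d) : f ≠ 0 := by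
  rintro rfl
  exact Finset.notMem_empty d h.1

lemma MvPolynomial.support_subset_of_mem_supported {σ R : Type*} [CommSemiring R] {s : Set σ}
    {p : MvPolynomial σ R} (hp : p ∈ supported R s) {d : σ →₀ ℕ} (hd : d ∈ p.support) :
    ↑d.support ⊆ s :=
  (Finset.coe_subset.2 (support_subset_vars_of_mem_support hd)).trans (mem_supported.1 hp)

lemma isLeadingTerm_X_sub {K : Type*} [CommRing K] [Nontrivial K] (τ : TermOrder n) (j : Fin n)
    {p : MvPolynomial (Fin n) K} (hj : Finsupp.single j 1 ∉ p.support)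
    (hlt : ∀ d ∈ p.support, τ.le d (Finsupp.single j 1)) :
    IsLeadingTerm τ (X j - p) (Finsupp.single j 1) := by
  have hsupp : (X j - p).support ⊆ {Finsupp.single j 1} ∪ p.support := by
    classical
    simpa only [support_X] using support_sub (Fin n) (X j) p
  constructor
  · rw [mem_support_iff, coeff_sub, coeff_X_same, notMem_support_iff.1 hj, sub_zero]
    exact one_ne_zero
  · intro d hd
    rcases Finset.mem_union.1 (hsupp hd) with hd | hd
    · rw [Finset.mem_singleton.1 hd]
      exact τ.le_refl _
    · exact hlt d hd

lemma IsSquarefreePoly.X_sub {p : MvPolynomial (Fin n) (ZMod 2)} (hp : IsSquarefreePoly p)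
    (j : Fin n) : IsSquarefreePoly (X j - p) := by
  classical
  intro d hd i
  rcases Finset.mem_union.1 (support_sub (Fin n) (X j) p hd) with hd | hd
  · rw [support_X, Finset.mem_singleton] at hd
    rw [hd, Finsupp.single_apply]
    split_ifs <;> simp
  · exact hp d hd i

theorem Z_in_leading_term_ideal_of_elim_ordering_general {n s : ℕ}
    (I' : Ideal (MvPolynomial (Fin n) (ZMod 2)))
    (Z : Fin s → Fin n)
    (H : Fin s → MvPolynomial (Fin n) (ZMod 2))
    (hHS : ∀ i, H i ∈ MvPolynomial.supported (ZMod 2) ((Set.range Z)ᶜ))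
    (hsfH : ∀ i, IsSquarefreePoly (H i))
    (hFI : ∀ i, (X (Z i) : MvPolynomial (Fin n) (ZMod 2)) - H i ∈ I')
    (τ : TermOrder n)
    (helim : ∀ d d' : Fin n →₀ ℕ, (∀ i, d (Z i) = 0) → (∃ i, d' (Z i) ≠ 0) → τ.le d d') :
    Ideal.span (Set.range fun i =>
        Ideal.Quotient.mk (fieldIdeal n) (X (Z i) : MvPolynomial (Fin n) (ZMod 2))) ≤
      Ideal.span {q : MvPolynomial (Fin n) (ZMod 2) ⧸ fieldIdeal n |
        ∃ f ∈ I', IsSquarefreePoly f ∧ f ≠ 0 ∧ ∃ d, IsLeadingTerm τ f d ∧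
          q = Ideal.Quotient.mk (fieldIdeal n) (MvPolynomial.monomial d (1 : ZMod 2))} := by
  rw [Ideal.span_le]
  rintro _ ⟨i, rfl⟩
  have hH_free : ∀ d ∈ (H i).support, ∀ j, d (Z j) = 0 := fun d hd j =>
    Finsupp.notMem_support_iff.1 fun hj =>
      support_subset_of_mem_supported (hHS i) hd hj ⟨j, rfl⟩
  have hlead : IsLeadingTerm τ (X (Z i) - H i) (Finsupp.single (Z i) 1) :=
    isLeadingTerm_X_sub τ (Z i) (fun hd => by simpa using hH_free _ hd i)
      fun d hd => helim d _ (hH_free d hd) ⟨i, by simp⟩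
  exact Ideal.subset_span
    ⟨_, hFI i, (hsfH i).X_sub (Z i), hlead.ne_zero, _, hlead, rfl⟩

/-- If a proper Boolean ideal `I` (represented by `I' ⊇ I_n`) admits a
coherently `Z`-separating tuple `(X (Z i) − H i)` with `H i ∈ B_m`, then for every
elimination ordering `τ` for `Z`, the ideal generated by the `z_i` is contained in the
leading term ideal `LT_τ(I)` (computed via square-free canonical representatives). -/
theorem Z_in_leading_term_ideal_of_elim_ordering {n s : ℕ}
    (I' : Ideal (MvPolynomial (Fin n) (ZMod 2))) (hI' : I' ≠ ⊤)
    (hIn : fieldIdeal n ≤ I')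
    (Z : Fin s → Fin n) (hZ : Function.Injective Z)
    (H : Fin s → MvPolynomial (Fin n) (ZMod 2))
    (hHS : ∀ i, H i ∈ MvPolynomial.supported (ZMod 2) ((Set.range Z)ᶜ))
    (hsfH : ∀ i, IsSquarefreePoly (H i))
    (hFI : ∀ i, (X (Z i) : MvPolynomial (Fin n) (ZMod 2)) - H i ∈ I')
    (τ : TermOrder n)
    (helim : ∀ d d' : Fin n →₀ ℕ, (∀ i, d (Z i) = 0) → (∃ i, d' (Z i) ≠ 0) → τ.le d d') :
    Ideal.span (Set.range fun i =>
        Ideal.Quotient.mk (fieldIdeal n) (X (Z i) : MvPolynomial (Fin n) (ZMod 2))) ≤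
      Ideal.span {q : MvPolynomial (Fin n) (ZMod 2) ⧸ fieldIdeal n |
        ∃ f ∈ I', IsSquarefreePoly f ∧ f ≠ 0 ∧ ∃ d, IsLeadingTerm τ f d ∧
          q = Ideal.Quotient.mk (fieldIdeal n) (MvPolynomial.monomial d (1 : ZMod 2))} :=
  Z_in_leading_term_ideal_of_elim_ordering_general I' Z H hHS hsfH hFI τ helim
end
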